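/- arXiv:2012.06019 — 2 statements merged into one kernel-verified Lean document; each statement's English description precedes it below -/
import Mathlib

section
/- For every real s < 1, the limit lim_{z → 1⁻} (−ln z)^{1−s} · Li_s(z) = Γ(1−s) holds, where Γ denotes the Gamma function; equivalently, Li_s(z) is asymptotic to Γ(1−s)(−ln z)^{s−1} as z → 1 from the left. -/
/-!
Put `t = -log z`. Then `t ^ (1 - s) * Li s z = ∑_{n ≥ 1} t * f (t * n)` with
`f x = exp (-x) * x ^ (-s)`, a right Riemann sum of `∫₀^∞ f = Γ(1 - s)` with mesh `t`. It is the
integral of the step function `x ↦ f (t * ⌈x / t⌉)`, which tends to `f` pointwise as `t → 0⁺`.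
Since `t * ⌈x / t⌉ ∈ [x, x + t]`, for `t ≤ 1` the step functions are dominated by the integrable
`exp (-x) * (x ^ (-s) + (x + 1) ^ (-s))`, and dominated convergence applies.
-/

/-- The polylogarithm `Li_s(p) = ∑_{k=1}^∞ p^k / k^s`, defined for real `s` on `[0,1)`. -/
noncomputable def Li (s : ℝ) (p : ℝ) : ℝ := ∑' k : ℕ, p ^ (k + 1) / ((k : ℝ) + 1) ^ s

open Set MeasureTheory Filter Topology Real

section RiemannSum

variable {E : Type*} [NormedAddCommGroup E] {f : ℝ → E} {g : ℝ → ℝ} {t : ℝ}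

lemma mul_natCeil_div_mem_Ico (ht : 0 < t) {x : ℝ} (hx : 0 ≤ x) :
    t * ⌈x / t⌉₊ ∈ Ico x (x + t) := by
  constructor
  · rw [← div_le_iff₀' ht]; exact Nat.le_ceil _
  · have := Nat.ceil_lt_add_one (div_nonneg hx ht.le)
    rw [div_add_one ht.ne', lt_div_iff₀' ht] at this
    exact this

lemma natCeil_div_eq_of_mem_Ioc (ht : 0 < t) (n : ℕ) {x : ℝ}
    (hx : x ∈ Ioc (t * n) (t * (n + 1))) : ⌈x / t⌉₊ = n + 1 := by
  rw [Nat.ceil_eq_iff n.succ_ne_zero, Nat.succ_sub_one, lt_div_iff₀' ht, div_le_iff₀' ht]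
  push_cast
  exact hx

lemma iUnion_Ioc_mul_natCast (ht : 0 < t) : ⋃ n : ℕ, Ioc (t * n) (t * (n + 1)) = Ioi 0 := by
  ext x
  simp only [mem_iUnion, mem_Ioi]
  refine ⟨fun ⟨n, hn⟩ => lt_of_le_of_lt (by positivity) hn.1, fun hx => ⟨⌈x / t⌉₊ - 1, ?_⟩⟩
  have hpos : 0 < ⌈x / t⌉₊ := Nat.ceil_pos.2 (div_pos hx ht)
  obtain ⟨hle, hlt⟩ := mul_natCeil_div_mem_Ico ht hx.le
  rw [Nat.cast_sub hpos, Nat.cast_one, sub_add_cancel]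
  constructor <;> linarith

lemma tendsto_mul_natCeil_div {x : ℝ} (hx : 0 ≤ x) :
    Tendsto (fun t : ℝ => t * ⌈x / t⌉₊) (𝓝[>] 0) (𝓝 x) := by
  have hupper : Tendsto (fun t : ℝ => x + t) (𝓝[>] 0) (𝓝 x) := by
    simpa using (tendsto_const_nhds.add tendsto_id).mono_left (nhdsWithin_le_nhds (a := (0 : ℝ)))
  refine tendsto_of_tendsto_of_tendsto_of_le_of_le' tendsto_const_nhds hupper ?_ ?_ <;>
    filter_upwards [self_mem_nhdsWithin] with t (ht : 0 < t)
  exacts [(mul_natCeil_div_mem_Ico ht hx).1, (mul_natCeil_div_mem_Ico ht hx).2.le]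

lemma aestronglyMeasurable_comp_mul_natCeil_div (f : ℝ → E) (t : ℝ) (μ : Measure ℝ) :
    AEStronglyMeasurable (fun x => f (t * ⌈x / t⌉₊)) μ :=
  ((StronglyMeasurable.of_discrete (f := fun n : ℕ => f (t * n))).comp_measurable
    (Nat.measurable_ceil.comp (measurable_id.div_const t))).aestronglyMeasurable

lemma ae_norm_comp_mul_natCeil_div_le (hfg : ∀ x > 0, ∀ y ∈ Icc x (x + 1), ‖f y‖ ≤ g x)
    (ht : t ∈ Ioc 0 1) : ∀ᵐ x ∂volume.restrict (Ioi 0), ‖f (t * ⌈x / t⌉₊)‖ ≤ g x := by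
  refine (ae_restrict_iff' measurableSet_Ioi).2 (ae_of_all _ fun x (hx : 0 < x) => ?_)
  obtain ⟨hle, hlt⟩ := mul_natCeil_div_mem_Ico ht.1 hx.le
  exact hfg x hx _ ⟨hle, by linarith [ht.2]⟩

variable [NormedSpace ℝ E]

lemma setIntegral_comp_mul_natCeil_div [CompleteSpace E] (ht : 0 < t)
    (hf : IntegrableOn (fun x => f (t * ⌈x / t⌉₊)) (Ioi 0)) :
    ∫ x in Ioi 0, f (t * ⌈x / t⌉₊) = ∑' n : ℕ, t • f (t * (n + 1)) := by
  rw [← iUnion_Ioc_mul_natCast ht] at hf ⊢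
  rw [integral_iUnion (fun _ => measurableSet_Ioc) ?_ hf]
  · congr 1; ext n
    rw [setIntegral_congr_fun measurableSet_Ioc (fun x hx => by
      rw [natCeil_div_eq_of_mem_Ioc ht n hx]), setIntegral_const,
      Real.volume_real_Ioc_of_le (mul_le_mul_of_nonneg_left (by linarith) ht.le)]
    simp only [Nat.cast_add_one, mul_add_one, add_sub_cancel_left]
  · intro m n hmn
    refine Set.disjoint_left.2 fun x hm hn => hmn ?_
    have := (natCeil_div_eq_of_mem_Ioc ht m hm).symm.trans (natCeil_div_eq_of_mem_Ioc ht n hn)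
    omega

lemma tendsto_setIntegral_comp_mul_natCeil_div (hf : ContinuousOn f (Ioi 0))
    (hg : IntegrableOn g (Ioi 0)) (hfg : ∀ x > 0, ∀ y ∈ Icc x (x + 1), ‖f y‖ ≤ g x) :
    Tendsto (fun t => ∫ x in Ioi 0, f (t * ⌈x / t⌉₊)) (𝓝[>] 0) (𝓝 (∫ x in Ioi 0, f x)) := by
  refine tendsto_integral_filter_of_dominated_convergence g
    (Eventually.of_forall fun t => aestronglyMeasurable_comp_mul_natCeil_div f t _)
    ?_ hg ?_
  · filter_upwards [Ioc_mem_nhdsGT one_pos] with t ht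
    exact ae_norm_comp_mul_natCeil_div_le hfg ht
  · refine (ae_restrict_iff' measurableSet_Ioi).2 (ae_of_all _ fun x (hx : 0 < x) => ?_)
    exact (hf.continuousAt (Ioi_mem_nhds hx)).tendsto.comp (tendsto_mul_natCeil_div hx.le)

theorem tendsto_tsum_smul_comp_mul_of_dominated [CompleteSpace E] (hf : ContinuousOn f (Ioi 0))
    (hg : IntegrableOn g (Ioi 0)) (hfg : ∀ x > 0, ∀ y ∈ Icc x (x + 1), ‖f y‖ ≤ g x) :
    Tendsto (fun t => ∑' n : ℕ, t • f (t * (n + 1))) (𝓝[>] 0) (𝓝 (∫ x in Ioi 0, f x)) := by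
  refine (tendsto_setIntegral_comp_mul_natCeil_div hf hg hfg).congr' ?_
  filter_upwards [Ioc_mem_nhdsGT one_pos] with t ht
  exact setIntegral_comp_mul_natCeil_div ht.1 (hg.mono'
    (aestronglyMeasurable_comp_mul_natCeil_div f t _) (ae_norm_comp_mul_natCeil_div_le hfg ht))

end RiemannSum

lemma integrableOn_Ioi_comp_add_right {E : Type*} [NormedAddCommGroup E] {F : ℝ → E} {b : ℝ}
    (hF : IntegrableOn F (Ioi b)) (c : ℝ) : IntegrableOn (fun x => F (x + c)) (Ioi (b - c)) := by
  rw [← preimage_add_const_Ioi]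
  exact ((measurePreserving_add_right volume c).integrableOn_comp_preimage
    (measurableEmbedding_addRight c)).2 hF

lemma Real.rpow_le_rpow_add_rpow {x y z : ℝ} (hx : 0 < x) (hxy : x ≤ y) (hyz : y ≤ z) (r : ℝ) :
    y ^ r ≤ x ^ r + z ^ r := by
  rcases le_total 0 r with hr | hr
  · linarith [rpow_le_rpow (hx.le.trans hxy) hyz hr, rpow_nonneg hx.le r]
  · linarith [rpow_le_rpow_of_nonpos hx hxy hr, rpow_nonneg (hx.le.trans (hxy.trans hyz)) r]

lemma integrableOn_exp_neg_mul_rpow_add_one {a : ℝ} (ha : 0 < a) :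
    IntegrableOn (fun x => exp (-x) * (x + 1) ^ (a - 1)) (Ioi 0) := by
  have h := integrableOn_Ioi_comp_add_right
    ((GammaIntegral_convergent ha).mono_set (Ioi_subset_Ioi zero_le_one)) 1
  rw [sub_self] at h
  refine IntegrableOn.congr_fun (h.const_mul (exp 1)) (fun x _ => ?_) measurableSet_Ioi
  rw [neg_add, exp_add, ← mul_assoc, mul_comm (exp 1), mul_assoc (exp (-x)), ← exp_add]
  simp

theorem tendsto_tsum_mul_exp_neg_mul_rpow {a : ℝ} (ha : 0 < a) :
    Tendsto (fun t => ∑' n : ℕ, t * (exp (-(t * (n + 1))) * (t * (n + 1)) ^ (a - 1)))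
      (𝓝[>] 0) (𝓝 (Gamma a)) := by
  rw [Gamma_eq_integral ha]
  refine tendsto_tsum_smul_comp_mul_of_dominated
    (g := fun x => exp (-x) * (x ^ (a - 1) + (x + 1) ^ (a - 1))) ?_ ?_ fun x hx y hy => ?_
  · exact (continuous_exp.comp continuous_neg).continuousOn.mul
      (continuousOn_id.rpow_const fun x hx => Or.inl (ne_of_gt hx))
  · simp only [mul_add]
    exact (GammaIntegral_convergent ha).add (integrableOn_exp_neg_mul_rpow_add_one ha)
  · have hy0 : 0 ≤ y := hx.le.trans hy.1
    rw [norm_of_nonneg (mul_nonneg (exp_pos _).le (rpow_nonneg hy0 _))]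
    exact mul_le_mul (exp_le_exp.2 (neg_le_neg hy.1)) (rpow_le_rpow_add_rpow hx hy.1 hy.2 _)
      (rpow_nonneg hy0 _) (exp_pos _).le

lemma rpow_one_sub_mul_Li_exp_neg (s : ℝ) {t : ℝ} (ht : 0 < t) :
    t ^ (1 - s) * Li s (exp (-t)) =
      ∑' n : ℕ, t * (exp (-(t * (n + 1))) * (t * (n + 1)) ^ (1 - s - 1)) := by
  rw [Li, ← tsum_mul_left]
  congr 1; ext n
  rw [sub_sub_cancel_left, mul_rpow ht.le (by positivity), rpow_neg ht.le,
    rpow_neg (by positivity), ← exp_nat_mul, rpow_sub ht, rpow_one]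
  push_cast
  ring_nf

lemma tendsto_neg_log_nhdsLT_one : Tendsto (fun z => -log z) (𝓝[<] 1) (𝓝[>] 0) := by
  refine tendsto_nhdsWithin_of_tendsto_nhds_of_eventually_within _ ?_ ?_
  · have h := (continuousAt_log one_ne_zero).neg.tendsto
    rw [Pi.neg_apply, log_one, neg_zero] at h
    exact h.mono_left nhdsWithin_le_nhds
  · filter_upwards [Ioo_mem_nhdsLT zero_lt_one] with z hz
    exact neg_pos.2 (log_neg hz.1 hz.2)

/-- For every real `s < 1`,
`lim_{z → 1⁻} (−ln z)^{1−s} · Li_s(z) = Γ(1−s)`, i.e. `Li_s(z) ~ Γ(1−s)(−ln z)^{s−1}`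
as `z → 1⁻`,  where `Γ` is the (real) Gamma function. -/
theorem polylog_asymptotic_near_one (s : ℝ) (hs : s < 1) :
    Filter.Tendsto (fun z : ℝ => (-Real.log z) ^ (1 - s) * Li s z)
      (nhdsWithin 1 (Set.Iio 1)) (nhds (Real.Gamma (1 - s))) := by
  refine ((tendsto_tsum_mul_exp_neg_mul_rpow (sub_pos.2 hs)).comp
    tendsto_neg_log_nhdsLT_one).congr' ?_
  filter_upwards [Ioo_mem_nhdsLT zero_lt_one] with z hz
  rw [Function.comp_apply, ← rpow_one_sub_mul_Li_exp_neg s (neg_pos.2 (log_neg hz.1 hz.2)),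
    neg_neg, exp_log hz.1]
end

section
/- Let m be a positive integer and let s be a real number with s < 1 − 1/m. Then the m-th moment of the random variable Y_s with quantile function Li_s is infinite; that is, the extended-real integral ∫_0^1 Li_s(p)^m dp = +∞ (equivalently, p ↦ Li_s(p)^m is not integrable on [0,1)). -/
/-!
For `0 ≤ s ≤ 1` and `p` near `1`, the first `n ≈ (1 - p)⁻¹` terms of `Li_s(p)` are each
at least `p ^ n / n ^ s ≥ e⁻³ n ^ (-s)`, so `Li_s(p) ≥ e⁻³ (1 - p) ^ (s - 1)`.
As `Li_s` decreases in `s`, the case `s' = 1 - 1/m` gives `Li_s(p) ^ m ≥ e^(-3m) (1 - p)⁻¹`,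
which is not integrable at `1`.
-/

open MeasureTheory

open Real Set

lemma summable_Li (s : ℝ) {p : ℝ} (hp0 : 0 ≤ p) (hp1 : p < 1) :
    Summable (fun k : ℕ => p ^ (k + 1) / ((k : ℝ) + 1) ^ s) := by
  set d : ℕ := ⌈-s⌉₊
  have hgeom : Summable (fun k : ℕ => ((k + 1 : ℕ) : ℝ) ^ d * p ^ (k + 1)) :=
    (summable_nat_add_iff (f := fun k : ℕ => (k : ℝ) ^ d * p ^ k) 1).2 <|
      summable_pow_mul_geometric_of_norm_lt_one d (by rwa [Real.norm_of_nonneg hp0])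
  refine hgeom.of_nonneg_of_le (fun k => by positivity) fun k => ?_
  have hk1 : (1 : ℝ) ≤ (k : ℝ) + 1 := le_add_of_nonneg_left k.cast_nonneg
  have hexp : ((k : ℝ) + 1) ^ (-s) ≤ ((k : ℝ) + 1) ^ d := by
    simpa only [rpow_natCast] using rpow_le_rpow_of_exponent_le hk1 (Nat.le_ceil (-s))
  rw [div_eq_mul_inv, ← rpow_neg (by positivity), mul_comm]
  push_cast
  exact mul_le_mul_of_nonneg_right hexp (by positivity)

lemma Li_le_Li_of_le {s s' : ℝ} (hss' : s ≤ s') {p : ℝ} (hp0 : 0 ≤ p) (hp1 : p < 1) :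
    Li s' p ≤ Li s p := by
  refine (summable_Li s' hp0 hp1).tsum_le_tsum (fun k => ?_) (summable_Li s hp0 hp1)
  have hk1 : (1 : ℝ) ≤ (k : ℝ) + 1 := le_add_of_nonneg_left k.cast_nonneg
  exact div_le_div_of_nonneg_left (by positivity) (by positivity)
    (rpow_le_rpow_of_exponent_le hk1 hss')

lemma exp_neg_two_mul_le_pow {p : ℝ} (hp : 1 / 2 ≤ p) (hp1 : p ≤ 1) (n : ℕ) :
    exp (n * -(2 * (1 - p))) ≤ p ^ n := by
  have hp0 : 0 < p := by linarith
  have hlog : -(2 * (1 - p)) ≤ log p := calc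
    -(2 * (1 - p)) ≤ 1 - p⁻¹ := by
      have hinv : p⁻¹ ≤ 2 := by rw [inv_le_comm₀ hp0 two_pos]; linarith
      nlinarith [mul_nonneg (sub_nonneg.2 hp1) (sub_nonneg.2 hinv), mul_inv_cancel₀ hp0.ne']
    _ ≤ log p := one_sub_inv_le_log_of_pos hp0
  calc exp (n * -(2 * (1 - p))) = exp (-(2 * (1 - p))) ^ n := exp_nat_mul _ n
    _ ≤ exp (log p) ^ n := by gcongr
    _ = p ^ n := by rw [exp_log hp0]

lemma exp_neg_three_mul_rpow_le_Li {s p : ℝ} (hs0 : 0 ≤ s) (hs1 : s ≤ 1) (hp : 1 / 2 ≤ p)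
    (hp1 : p < 1) : exp (-3) * (1 - p) ^ (s - 1) ≤ Li s p := by
  set t := 1 - p
  have ht0 : 0 < t := by linarith
  set n : ℕ := ⌈t⁻¹⌉₊
  have hnt : t⁻¹ ≤ n := Nat.le_ceil _
  have hn0 : (0 : ℝ) < n := (inv_pos.2 ht0).trans_le hnt
  have hnt' : n * t ≤ 3 / 2 := by
    have := (Nat.ceil_lt_add_one (inv_pos.2 ht0).le).le
    calc n * t ≤ (t⁻¹ + 1) * t := by gcongr
      _ = 1 + t := by field_simp
      _ ≤ 3 / 2 := by linarith
  have hpartial : n * (p ^ n / (n : ℝ) ^ s) ≤ Li s p := calc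
    n * (p ^ n / (n : ℝ) ^ s) = ∑ _k ∈ Finset.range n, p ^ n / (n : ℝ) ^ s := by simp
    _ ≤ ∑ k ∈ Finset.range n, p ^ (k + 1) / ((k : ℝ) + 1) ^ s := by
      refine Finset.sum_le_sum fun k hk => ?_
      have hkn : k + 1 ≤ n := Finset.mem_range.1 hk
      exact div_le_div₀ (by positivity) (pow_le_pow_of_le_one (by linarith) hp1.le hkn)
        (by positivity) (rpow_le_rpow (by positivity) (by exact_mod_cast hkn) hs0)
    _ ≤ Li s p :=
      (summable_Li s (by linarith) hp1).sum_le_tsum _ fun k _ => by positivity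
  have hpow : exp (-3) ≤ p ^ n := calc
    exp (-3) ≤ exp (n * -(2 * t)) := exp_le_exp.2 (by nlinarith)
    _ ≤ p ^ n := exp_neg_two_mul_le_pow hp hp1.le n
  have hrpow : t ^ (s - 1) ≤ (n : ℝ) ^ (1 - s) := by
    rw [← neg_sub, rpow_neg ht0.le, ← inv_rpow ht0.le]
    exact rpow_le_rpow (by positivity) hnt (by linarith)
  calc exp (-3) * t ^ (s - 1) ≤ p ^ n * (n : ℝ) ^ (1 - s) :=
        mul_le_mul hpow hrpow (by positivity) (by positivity)
    _ = n * (p ^ n / (n : ℝ) ^ s) := by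
        rw [rpow_sub hn0, rpow_one]; ring
    _ ≤ Li s p := hpartial

lemma exp_neg_three_pow_mul_inv_le_Li_pow {m : ℕ} (hm : 0 < m) {s : ℝ} (hs : s ≤ 1 - 1 / m)
    {p : ℝ} (hp : 1 / 2 ≤ p) (hp1 : p < 1) : exp (-3) ^ m * (1 - p)⁻¹ ≤ Li s p ^ m := by
  have hm1 : (1 : ℝ) / m ≤ 1 := by
    rw [div_le_one (by exact_mod_cast hm)]; exact_mod_cast hm
  have hm0 : 0 ≤ (1 : ℝ) / m := by positivity
  have hLi := (exp_neg_three_mul_rpow_le_Li (by linarith) (by linarith) hp hp1).trans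
    (Li_le_Li_of_le hs (by linarith) hp1)
  calc exp (-3) ^ m * (1 - p)⁻¹ = (exp (-3) * (1 - p) ^ (1 - 1 / (m : ℝ) - 1)) ^ m := by
        rw [mul_pow, ← rpow_natCast ((1 - p) ^ _), ← rpow_mul (by linarith)]
        field_simp
        simp [rpow_neg_one]
    _ ≤ Li s p ^ m := pow_le_pow_left₀ (by positivity) hLi m

lemma lintegral_ofReal_inv_one_sub_eq_top {a : ℝ} (ha : a < 1) :
    ∫⁻ p in Ico a 1, ENNReal.ofReal (1 - p)⁻¹ = ⊤ := by
  by_contra h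
  have hint : IntegrableOn (fun p => (1 - p)⁻¹) (Ico a 1) := by
    refine (lintegral_ofReal_ne_top_iff_integrable (by fun_prop) ?_).1 h
    exact ae_restrict_of_forall_mem measurableSet_Ico fun p hp =>
      inv_nonneg.2 (sub_nonneg.2 hp.2.le)
  have hint' : IntervalIntegrable (fun p => (p - 1)⁻¹) volume a 1 := by
    rw [intervalIntegrable_iff_integrableOn_Ico_of_le ha.le]
    exact hint.neg.congr_fun (fun p _ => by rw [Pi.neg_apply, ← inv_neg, neg_sub])
      measurableSet_Ico
  rw [intervalIntegrable_sub_inv_iff] at hint'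
  exact hint'.elim ha.ne (fun h1 => h1 (right_mem_uIcc))

/-- Let `m` be a positive integer and `s < 1 − 1/m` real. Then the `m`-th
moment of the random variable with quantile function `Li_s` is infinite:
`∫_0^1 Li_s(p)^m dp = +∞` as an extended-real integral (equivalently, `p ↦ Li_s(p)^m`
is not integrable on `[0,1)`). -/
theorem polylog_moment_infinite (m : ℕ) (hm : 0 < m) (s : ℝ) (hs : s < 1 - 1 / m) :
    ∫⁻ p in Set.Ico (0:ℝ) 1, ENNReal.ofReal (Li s p ^ m) = ⊤ := by
  refine top_unique ?_
  calc ⊤ = ENNReal.ofReal (exp (-3) ^ m) *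
        ∫⁻ p in Ico (1 / 2) 1, ENNReal.ofReal (1 - p)⁻¹ := by
        rw [lintegral_ofReal_inv_one_sub_eq_top (by norm_num), ENNReal.mul_top (by positivity)]
    _ = ∫⁻ p in Ico (1 / 2) 1, ENNReal.ofReal (exp (-3) ^ m * (1 - p)⁻¹) := by
        rw [← lintegral_const_mul' _ _ ENNReal.ofReal_ne_top]
        refine setLIntegral_congr_fun measurableSet_Ico fun p _ => ?_
        rw [ENNReal.ofReal_mul (by positivity)]
    _ ≤ ∫⁻ p in Ico (1 / 2) 1, ENNReal.ofReal (Li s p ^ m) :=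
        setLIntegral_mono' measurableSet_Ico fun p hp =>
          ENNReal.ofReal_le_ofReal (exp_neg_three_pow_mul_inv_le_Li_pow hm hs.le hp.1 hp.2)
    _ ≤ ∫⁻ p in Ico 0 1, ENNReal.ofReal (Li s p ^ m) :=
        lintegral_mono_set (Ico_subset_Ico_left (by norm_num))
end
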